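/- arXiv:2304.04433 — 5 statements merged into one kernel-verified Lean document; each statement's English description precedes it below -/
import Mathlib

section
/- Ramana's primal-dual SDP pair has a nonzero finite duality gap: the optimal value of the primal (min x₁₁ subject to x₁₁ + 2x₂₃ = 1, x₂₂ = 0, X ⪰ 0 over symmetric 3×3 X) equals 1, while the optimal value of the dual (max y₁ subject to [[1−y₁,0,0],[0,−y₂,−y₁],[0,−y₁,0]] ⪰ 0) equals 0. -/
/-!
Both optimal values come from one fact: in a positive semidefinite matrix a zero diagonal entry
forces its whole row to vanish, since otherwise the quadratic form is negative on a suitable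
vector supported on two coordinates. In the primal, `x₂₂ = 0` forces `x₂₃ = 0`, hence `x₁₁ = 1`
for every feasible `X`; in the dual, the zero `(3,3)` entry forces the entry `-y₁` to vanish,
hence `y₁ = 0` for every feasible `y`. The matrix `diag(1,0,0)` is feasible for both.
-/

theorem eq_zero_of_forall_nonneg_mul_add {R : Type*} [Field R] [LinearOrder R]
    [IsStrictOrderedRing R] {c d : R} (h : ∀ t, 0 ≤ t * c + d) : c = 0 := by
  by_contra hc
  have := h (-(d + 1) / c)
  rw [div_mul_cancel₀ _ hc] at this
  linarith

namespace Matrix.PosSemidef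

variable {n R : Type*} [Field R] [LinearOrder R] [IsStrictOrderedRing R] [StarRing R]
  [TrivialStar R]

theorem apply_eq_zero_of_diag_eq_zero {A : Matrix n n R} (hA : A.PosSemidef) {i : n}
    (hii : A i i = 0) (j : n) : A i j = 0 := by
  have hsymm : A j i = A i j := by simpa using congrFun₂ hA.isHermitian i j
  refine eq_zero_of_forall_nonneg_mul_add (d := A j j) fun t => ?_
  -- the quadratic form at `e_j + (t/2) e_i` is `A j j + t * A i j`
  have hform := (hA.submatrix ![j, i]).dotProduct_mulVec_nonneg ![1, t / 2]
  simp only [dotProduct, mulVec, Pi.star_apply, star_trivial, submatrix_apply, Fin.sum_univ_two,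
    cons_val_zero, cons_val_one, cons_val_fin_one, mul_one, one_mul, hsymm, hii, zero_mul,
    add_zero] at hform
  linarith

end Matrix.PosSemidef

/-- Ramana's primal-dual SDP pair has a finite nonzero duality gap:
the primal optimal value is `1` while the dual optimal value is `0`. -/
theorem ramana_duality_gap :
    IsLeast {v : ℝ | ∃ X : Matrix (Fin 3) (Fin 3) ℝ, X.PosSemidef ∧
      X 0 0 + 2 * X 1 2 = 1 ∧ X 1 1 = 0 ∧ v = X 0 0} 1 ∧
    IsGreatest {v : ℝ | ∃ y₂ : ℝ,
      (!![1 - v, 0, 0; 0, -y₂, -v; 0, -v, 0] : Matrix (Fin 3) (Fin 3) ℝ).PosSemidef} 0 := by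
  have hE : (!![1, 0, 0; 0, 0, 0; 0, 0, 0] : Matrix (Fin 3) (Fin 3) ℝ).PosSemidef := by
    rw [show !![1, 0, 0; 0, 0, 0; 0, 0, 0] = Matrix.diagonal ![(1 : ℝ), 0, 0] by
      ext i j; fin_cases i <;> fin_cases j <;> rfl]
    exact Matrix.PosSemidef.diagonal fun i => by fin_cases i <;> simp
  refine ⟨⟨⟨_, hE, by simp, rfl, rfl⟩, ?_⟩, ⟨⟨0, by simpa using hE⟩, ?_⟩⟩
  · rintro v ⟨X, hX, hlin, h11, rfl⟩
    have h12 := hX.apply_eq_zero_of_diag_eq_zero h11 2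
    linarith
  · rintro v ⟨y₂, hM⟩
    exact (neg_eq_zero.mp (hM.apply_eq_zero_of_diag_eq_zero (i := 2) rfl 1)).le
end

section
/- Let L₂₂ : ℝᵐ → Sᵖ be an affine map (p×p symmetric matrix valued) and suppose there exists a positive definite X₂₂ ∈ Sᵖ with trace(X₂₂ · L₂₂(y)) = 0 for all y ∈ ℝᵐ. Then there exists a constant M > 0 such that for all t ≥ 0 and all y ∈ ℝᵐ, if L₂₂(y) + t·I is positive semidefinite then tM·I − (L₂₂(y) + t·I) is positive semidefinite. -/
/-!
Let `A = L₂₂ y + t • 1 ⪰ 0`. Orthogonality gives `tr (X₂₂ A) = t · tr X₂₂`, and `X₂₂ ⪰ ε • 1` for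
some `ε > 0`, so `ε · tr A ≤ tr (X₂₂ A) = t · tr X₂₂`. A positive semidefinite matrix is dominated
by its trace times the identity, hence `A ⪯ t · (tr X₂₂ / ε) • 1`.
-/

open scoped MatrixOrder ComplexOrder

namespace Matrix

variable {n : Type*} [Fintype n] [DecidableEq n]

lemma trace_mul_nonneg {𝕜 : Type*} [RCLike 𝕜] {A B : Matrix n n 𝕜} (hA : 0 ≤ A) (hB : 0 ≤ B) :
    0 ≤ (A * B).trace := by
  rw [← CFC.sqrt_mul_sqrt_self B hB, ← mul_assoc, trace_mul_comm, ← mul_assoc]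
  nth_rw 1 [← (CFC.sqrt_nonneg B).isSelfAdjoint.star_eq]
  exact (nonneg_iff_posSemidef.mp (star_left_conjugate_nonneg hA _)).trace_nonneg

lemma smul_trace_le_trace_mul {ε : ℝ} {X A : Matrix n n ℝ} (hX : ε • 1 ≤ X) (hA : 0 ≤ A) :
    ε * A.trace ≤ (X * A).trace := by
  have h := trace_mul_nonneg (sub_nonneg.2 hX) hA
  rwa [sub_mul, trace_sub, smul_mul, one_mul, trace_smul, smul_eq_mul, sub_nonneg] at h

lemma PosSemidef.le_trace_smul_one {A : Matrix n n ℝ} (hA : A.PosSemidef) :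
    A ≤ A.trace • 1 := by
  rw [← Algebra.algebraMap_eq_smul_one]
  refine le_algebraMap_of_spectrum_le (fun x hx => ?_) hA.1.isSelfAdjoint
  obtain ⟨i, rfl⟩ := hA.1.spectrum_real_eq_range_eigenvalues ▸ hx
  rw [hA.1.trace_eq_sum_eigenvalues]
  simpa using Finset.single_le_sum (fun j _ => hA.eigenvalues_nonneg j) (Finset.mem_univ i)

lemma PosDef.exists_pos_smul_one_le {A : Matrix n n ℝ} (hA : A.PosDef) :
    ∃ ε : ℝ, 0 < ε ∧ ε • 1 ≤ A := by
  cases subsingleton_or_nontrivial (Matrix n n ℝ)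
  · exact ⟨1, one_pos, (Subsingleton.elim _ _).le⟩
  simp_rw [← Algebra.algebraMap_eq_smul_one]
  refine (CFC.exists_pos_algebraMap_le_iff hA.1.isSelfAdjoint).2 fun x hx => ?_
  obtain ⟨i, rfl⟩ := hA.1.spectrum_real_eq_range_eigenvalues ▸ hx
  exact hA.eigenvalues_pos i

lemma le_smul_one_of_trace_mul_eq {ε t M : ℝ} {X A : Matrix n n ℝ} (hε : 0 < ε)
    (hX : ε • 1 ≤ X) (hA : 0 ≤ A) (ht : 0 ≤ t) (hM : X.trace / ε ≤ M)
    (htr : (X * A).trace = t * X.trace) :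
    A ≤ (t * M) • 1 := by
  have htrace : A.trace ≤ t * M := calc
    A.trace ≤ t * X.trace / ε := by
      rw [le_div_iff₀ hε, mul_comm, ← htr]
      exact smul_trace_le_trace_mul hX hA
    _ = t * (X.trace / ε) := mul_div_assoc ..
    _ ≤ t * M := mul_le_mul_of_nonneg_left hM ht
  exact (nonneg_iff_posSemidef.mp hA).le_trace_smul_one.trans
    (smul_le_smul_of_nonneg_right htrace zero_le_one)

end Matrix

theorem boundedness_lemma_general {m p : ℕ}
    (L₂₂ : (Fin m → ℝ) → Matrix (Fin p) (Fin p) ℝ)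
    (X₂₂ : Matrix (Fin p) (Fin p) ℝ) (hX : X₂₂.PosDef)
    (horth : ∀ y, (X₂₂ * L₂₂ y).trace = 0) :
    ∃ M : ℝ, 0 < M ∧ ∀ t : ℝ, 0 ≤ t → ∀ y : Fin m → ℝ,
      (L₂₂ y + t • (1 : Matrix (Fin p) (Fin p) ℝ)).PosSemidef →
      ((t * M) • (1 : Matrix (Fin p) (Fin p) ℝ)
        - (L₂₂ y + t • (1 : Matrix (Fin p) (Fin p) ℝ))).PosSemidef := by
  obtain ⟨ε, hε, hXε⟩ := hX.exists_pos_smul_one_le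
  have htrX : 0 ≤ X₂₂.trace / ε := div_nonneg hX.posSemidef.trace_nonneg hε.le
  refine ⟨X₂₂.trace / ε + 1, by positivity, fun t ht y hA => ?_⟩
  have htr : (X₂₂ * (L₂₂ y + t • 1)).trace = t * X₂₂.trace := by
    rw [mul_add, Matrix.trace_add, horth, mul_smul_comm, mul_one, Matrix.trace_smul, smul_eq_mul, zero_add]
  exact Matrix.le_smul_one_of_trace_mul_eq hε hXε (Matrix.nonneg_iff_posSemidef.mpr hA) ht
    (le_add_of_nonneg_right zero_le_one) htr

/-- Boundedness lemma: if `L₂₂` is an affine symmetric-matrix-valued map and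
there is a positive definite `X₂₂` with `trace(X₂₂ · L₂₂(y)) = 0` for all `y`,
then there is `M > 0` with `t·M·I ⪰ L₂₂(y) + t·I` whenever `L₂₂(y) + t·I ⪰ 0`. -/
theorem boundedness_lemma {m p : ℕ}
    (L₂₂ : (Fin m → ℝ) → Matrix (Fin p) (Fin p) ℝ)
    (hsymm : ∀ y, (L₂₂ y).IsSymm)
    (haff : ∀ (y z : Fin m → ℝ) (a b : ℝ), a + b = 1 →
      L₂₂ (a • y + b • z) = a • L₂₂ y + b • L₂₂ z)
    (X₂₂ : Matrix (Fin p) (Fin p) ℝ) (hX : X₂₂.PosDef)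
    (horth : ∀ y, (X₂₂ * L₂₂ y).trace = 0) :
    ∃ M : ℝ, 0 < M ∧ ∀ t : ℝ, 0 ≤ t → ∀ y : Fin m → ℝ,
      (L₂₂ y + t • (1 : Matrix (Fin p) (Fin p) ℝ)).PosSemidef →
      ((t * M) • (1 : Matrix (Fin p) (Fin p) ℝ)
        - (L₂₂ y + t • (1 : Matrix (Fin p) (Fin p) ℝ))).PosSemidef :=
  boundedness_lemma_general L₂₂ X₂₂ hX horth
end

section
/- For the singularity-degree-two counter-example, fix α > 0 and δ > 0. For all sufficiently small t > 0 there exists y ∈ ℝ³ such that the matrix [[1+tα−y₁, 0, −y₃, −y₃], [0, tα−y₂, −y₁, 0], [−y₃, −y₁, tα−y₃, 0], [−y₃, 0, 0, tα]] is positive definite and (1+t)y₁ + t·y₂ + t·y₃ ≥ 1 − δ. -/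
/-!
With `s = √(tα)`, `y₃ = -γs` and `y₂ = -2y₁²/(γs)`, the slack matrix splits as a positive
diagonal plus three positive semidefinite rank-one terms as soon as `y₁ ≤ 1 - 3γ²`, so it is
positive definite for every `t > 0`. Since `t·y₂ = O(√t)` and `t·y₃ = O(t^{3/2})`, the
objective tends to `y₁ = 1 - δ/2` as `t ↓ 0`.
-/

open Matrix Filter Topology Real

/-- The slack matrix of the perturbed dual problem `D(ε, t)`. -/
def perturbedDualSlack (ε y₁ y₂ y₃ : ℝ) : Matrix (Fin 4) (Fin 4) ℝ :=
  !![1 + ε - y₁, 0, -y₃, -y₃;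
     0, ε - y₂, -y₁, 0;
     -y₃, -y₁, ε - y₃, 0;
     -y₃, 0, 0, ε]

section
variable {s γ y₁ : ℝ}

theorem perturbedDualSlack_eq_diagonal_add (hs : s ≠ 0) (hγ : γ ≠ 0) :
    perturbedDualSlack (s ^ 2) y₁ (-(2 * y₁ ^ 2 / (γ * s))) (-(γ * s)) =
      diagonal ![s ^ 2 + (1 - y₁ - 3 * γ ^ 2), s ^ 2, γ * s / 2, s ^ 2 / 2]
        + vecMulVec ![γ, 0, s, 0] ![γ, 0, s, 0]
        + (1 / 2 : ℝ) • vecMulVec ![2 * γ, 0, 0, s] ![2 * γ, 0, 0, s]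
        + (2 / (γ * s)) • vecMulVec ![0, y₁, -(γ * s / 2), 0] ![0, y₁, -(γ * s / 2), 0] := by
  ext i j
  fin_cases i <;> fin_cases j <;> simp [perturbedDualSlack] <;> field_simp <;> ring

theorem perturbedDualSlack_posDef (hs : 0 < s) (hγ : 0 < γ) (hy₁ : y₁ + 3 * γ ^ 2 ≤ 1) :
    (perturbedDualSlack (s ^ 2) y₁ (-(2 * y₁ ^ 2 / (γ * s))) (-(γ * s))).PosDef := by
  have rankOne (v : Fin 4 → ℝ) : (vecMulVec v v).PosSemidef := by
    simpa using posSemidef_vecMulVec_self_star v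
  rw [perturbedDualSlack_eq_diagonal_add hs.ne' hγ.ne']
  refine (((PosDef.diagonal fun i ↦ ?_).add_posSemidef (rankOne _)).add_posSemidef
    ((rankOne _).smul (by norm_num))).add_posSemidef ((rankOne _).smul (by positivity))
  fin_cases i <;> simp <;> nlinarith

end

theorem tendsto_perturbedDual_objective {α γ : ℝ} (hα : 0 < α) (hγ : 0 < γ) (y₁ : ℝ) :
    Tendsto (fun t ↦ (1 + t) * y₁ + t * -(2 * y₁ ^ 2 / (γ * √(t * α))) + t * -(γ * √(t * α)))
      (𝓝[>] 0) (𝓝 y₁) := by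
  set g : ℝ → ℝ := fun s ↦ (1 + s ^ 2 / α) * y₁ - 2 * y₁ ^ 2 * s / (α * γ) - γ * s ^ 3 / α
  have hg : Tendsto (fun t ↦ g √(t * α)) (𝓝 0) (𝓝 y₁) := by
    have : Continuous fun t ↦ g √(t * α) := by fun_prop
    simpa [g] using this.tendsto 0
  refine (hg.mono_left nhdsWithin_le_nhds).congr' (eventually_nhdsWithin_of_forall fun t ht ↦ ?_)
  have hs : 0 < √(t * α) := sqrt_pos.2 (mul_pos ht hα)
  have ht' : t = √(t * α) ^ 2 / α := by rw [sq_sqrt (mul_pos ht hα).le]; field_simp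
  simp only [g]
  generalize √(t * α) = s at hs ht' ⊢
  subst ht'
  field_simp
  ring

/-- For the singularity-degree-two counter-example, for every `α > 0` and
`δ > 0`, and every sufficiently small `t > 0`, the perturbed dual problem
`D(tα, t)` has a strictly feasible solution with objective value `≥ 1 − δ`. -/
theorem counterexample_perturbed_value
    (α δ : ℝ) (hα : 0 < α) (hδ : 0 < δ) :
    ∃ t₀ : ℝ, 0 < t₀ ∧ ∀ t : ℝ, 0 < t → t < t₀ →
      ∃ y₁ y₂ y₃ : ℝ,
        (!![1 + t * α - y₁, 0, -y₃, -y₃;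
            0, t * α - y₂, -y₁, 0;
            -y₃, -y₁, t * α - y₃, 0;
            -y₃, 0, 0, t * α] : Matrix (Fin 4) (Fin 4) ℝ).PosDef ∧
        (1 + t) * y₁ + t * y₂ + t * y₃ ≥ 1 - δ := by
  set γ := √(δ / 6)
  have hγ : 0 < γ := sqrt_pos.2 (by positivity)
  have hγδ : (1 - δ / 2) + 3 * γ ^ 2 = 1 := by rw [sq_sqrt (by positivity)]; ring
  have hobjective := (tendsto_perturbedDual_objective hα hγ (1 - δ / 2)).eventually
    (lt_mem_nhds (by linarith : 1 - δ < 1 - δ / 2))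
  obtain ⟨t₀, ht₀, hsmall⟩ := (nhdsGT_basis 0).eventually_iff.1 hobjective
  refine ⟨t₀, ht₀, fun t ht htt₀ ↦ ⟨_, _, _, ?_, (hsmall ⟨ht, htt₀⟩).le⟩⟩
  have hslack := perturbedDualSlack_posDef (sqrt_pos.2 (mul_pos ht hα)) hγ hγδ.le
  rwa [sq_sqrt (mul_pos ht hα).le] at hslack
end

section
/- Positive definiteness of the 4×4 matrix [[1+tα−y₁, 0, −y₃, −y₃], [0, tα−y₂, −y₁, 0], [−y₃, −y₁, tα−y₃, 0], [−y₃, 0, 0, tα]] (with t > 0, α > 0) is equivalent to the system: 1 + tα − y₁ − y₃²/(tα) > 0, tα − y₂ > 0, −y₃ + tα − y₃²/(1 + tα − y₁ − y₃²/(tα)) > 0, and tα − y₁²/(−y₃ + tα − y₃²/(1 + tα − y₁ − y₃²/(tα))) > y₂. -/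
/-!
Symmetric Gaussian elimination with the pivots taken in the order (4,4), (1,1), (3,3), (2,2)
produces the pivots `a = tα`, `b = 1 + a - y₁ - y₃²/a`, `c = a - y₃ - y₃²/b` and
`a - y₂ - y₁²/c`. When `b` and `c` are nonzero this is a congruence `M = Lᴴ D L` with `L`
invertible and `D` the diagonal matrix of pivots, so `M` is positive definite iff all pivots are
positive. If `M` is positive definite, its principal minors on the index sets `{4, 1}` and
`{4, 1, 3}`, which are `ab` and `abc`, are positive, so `b` and `c` are indeed positive.
-/

open Matrix

def counterexampleMatrix (a y₁ y₂ y₃ : ℝ) : Matrix (Fin 4) (Fin 4) ℝ :=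
  !![1 + a - y₁, 0, -y₃, -y₃;
     0, a - y₂, -y₁, 0;
     -y₃, -y₁, a - y₃, 0;
     -y₃, 0, 0, a]

noncomputable def eliminationMatrix (a b c y₁ y₃ : ℝ) : Matrix (Fin 4) (Fin 4) ℝ :=
  !![1, 0, -y₃ / b, 0;
     0, 1, 0, 0;
     0, -y₁ / c, 1, 0;
     -y₃ / a, 0, 0, 1]

section

variable {a b c y₁ y₂ y₃ : ℝ}

theorem det_eliminationMatrix : (eliminationMatrix a b c y₁ y₃).det = 1 := by
  simp [eliminationMatrix, det_succ_row_zero, Fin.sum_univ_succ, Fin.succAbove]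

theorem isUnit_eliminationMatrix : IsUnit (eliminationMatrix a b c y₁ y₃) := by
  rw [isUnit_iff_isUnit_det, det_eliminationMatrix]
  exact isUnit_one

theorem counterexampleMatrix_eq_star_mul_diagonal_mul (ha : a ≠ 0) (hb₀ : b ≠ 0) (hc₀ : c ≠ 0)
    (hb : b = 1 + a - y₁ - y₃ ^ 2 / a) (hc : c = -y₃ + a - y₃ ^ 2 / b) :
    counterexampleMatrix a y₁ y₂ y₃ = star (eliminationMatrix a b c y₁ y₃) *
      diagonal ![b, a - y₂ - y₁ ^ 2 / c, c, a] * eliminationMatrix a b c y₁ y₃ := by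
  have hab : a * b = a * (1 + a - y₁) - y₃ ^ 2 := by rw [hb]; field_simp
  have hbc : b * c = b * (a - y₃) - y₃ ^ 2 := by rw [hc]; field_simp; ring
  ext i j
  fin_cases i <;> fin_cases j <;>
    simp [counterexampleMatrix, eliminationMatrix, mul_apply, Fin.sum_univ_succ] <;>
    field_simp <;> first | linear_combination -hab | linear_combination -hbc | ring

theorem posDef_counterexampleMatrix_iff_of_ne_zero (ha : a ≠ 0) (hb₀ : b ≠ 0) (hc₀ : c ≠ 0)
    (hb : b = 1 + a - y₁ - y₃ ^ 2 / a) (hc : c = -y₃ + a - y₃ ^ 2 / b) :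
    (counterexampleMatrix a y₁ y₂ y₃).PosDef ↔
      0 < b ∧ 0 < a - y₂ - y₁ ^ 2 / c ∧ 0 < c ∧ 0 < a := by
  rw [counterexampleMatrix_eq_star_mul_diagonal_mul ha hb₀ hc₀ hb hc,
    IsUnit.posDef_star_left_conjugate_iff isUnit_eliminationMatrix, posDef_diagonal_iff]
  simp [Fin.forall_fin_succ]

theorem det_counterexampleMatrix_submatrix_two (ha : a ≠ 0) (hb : b = 1 + a - y₁ - y₃ ^ 2 / a) :
    ((counterexampleMatrix a y₁ y₂ y₃).submatrix ![3, 0] ![3, 0]).det = a * b := by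
  rw [hb, det_fin_two]
  simp only [counterexampleMatrix, submatrix_apply, of_apply, cons_val', cons_val, cons_val_zero,
    cons_val_one, cons_val_fin_one]
  field_simp

theorem det_counterexampleMatrix_submatrix_three (ha : a ≠ 0) (hb₀ : b ≠ 0)
    (hb : b = 1 + a - y₁ - y₃ ^ 2 / a) (hc : c = -y₃ + a - y₃ ^ 2 / b) :
    ((counterexampleMatrix a y₁ y₂ y₃).submatrix ![3, 0, 2] ![3, 0, 2]).det = a * b * c := by
  have hab : a * b = a * (1 + a - y₁) - y₃ ^ 2 := by rw [hb]; field_simp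
  have hbc : b * c = b * (a - y₃) - y₃ ^ 2 := by rw [hc]; field_simp; ring
  rw [det_fin_three]
  simp only [counterexampleMatrix, submatrix_apply, of_apply, cons_val', cons_val, cons_val_zero,
    cons_val_one, cons_val_fin_one]
  linear_combination (-a) * hbc - (a - y₃) * hab

theorem posDef_counterexampleMatrix_iff (ha : 0 < a)
    (hb : b = 1 + a - y₁ - y₃ ^ 2 / a) (hc : c = -y₃ + a - y₃ ^ 2 / b) :
    (counterexampleMatrix a y₁ y₂ y₃).PosDef ↔
      0 < b ∧ 0 < a - y₂ ∧ 0 < c ∧ y₂ < a - y₁ ^ 2 / c := by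
  constructor
  · intro hM
    have hb₀ : 0 < b := pos_of_mul_pos_right (det_counterexampleMatrix_submatrix_two ha.ne' hb ▸
      (hM.submatrix (by decide)).det_pos) ha.le
    have hc₀ : 0 < c := pos_of_mul_pos_right
      (det_counterexampleMatrix_submatrix_three ha.ne' hb₀.ne' hb hc ▸
        (hM.submatrix (by decide)).det_pos) (mul_pos ha hb₀).le
    obtain ⟨-, hd, -, -⟩ :=
      (posDef_counterexampleMatrix_iff_of_ne_zero ha.ne' hb₀.ne' hc₀.ne' hb hc).1 hM
    have : 0 ≤ y₁ ^ 2 / c := by positivity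
    exact ⟨hb₀, by linarith, hc₀, by linarith⟩
  · rintro ⟨hb₀, -, hc₀, hd⟩
    exact (posDef_counterexampleMatrix_iff_of_ne_zero ha.ne' hb₀.ne' hc₀.ne' hb hc).2
      ⟨hb₀, by linarith, hc₀, ha⟩

end

/-- Positive definiteness of the perturbed dual matrix of the counter-example
is equivalent to the system of inequalities obtained by successive Schur
complements. -/
theorem counterexample_posdef_iff
    (t α y₁ y₂ y₃ : ℝ) (ht : 0 < t) (hα : 0 < α) :
    (!![1 + t * α - y₁, 0, -y₃, -y₃;
        0, t * α - y₂, -y₁, 0;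
        -y₃, -y₁, t * α - y₃, 0;
        -y₃, 0, 0, t * α] : Matrix (Fin 4) (Fin 4) ℝ).PosDef ↔
      (0 < 1 + t * α - y₁ - y₃ ^ 2 / (t * α) ∧
       0 < t * α - y₂ ∧
       0 < -y₃ + t * α - y₃ ^ 2 / (1 + t * α - y₁ - y₃ ^ 2 / (t * α)) ∧
       y₂ < t * α - y₁ ^ 2 /
         (-y₃ + t * α - y₃ ^ 2 / (1 + t * α - y₁ - y₃ ^ 2 / (t * α)))) :=
  posDef_counterexampleMatrix_iff (mul_pos ht hα) rfl rfl
end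

section
/- Let K ⊆ E be a closed convex cone in a finite-dimensional real inner product space and let A ⊆ E be an affine subspace with A ∩ K nonempty. If A ∩ relint(K) = ∅, then there exists s ∈ (A⊥ ∩ K*) \ K⊥, i.e., ⟨s, x⟩ = 0 for all x ∈ A, s ∈ K*, and s ∉ K⊥. Moreover F := K ∩ {s}⊥ is a face of K properly contained in K with A ∩ K ⊆ F. -/
open Set

private lemma interior_subtype_congr {E : Type*} [TopologicalSpace E]
    {s t : Set E} (h : s = t) (K : Set E) {x : E} (hx : x ∈ t)
    (hx' : (⟨x, hx⟩ : t) ∈ interior (Subtype.val ⁻¹' K : Set t)) :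
    ∃ hxs : x ∈ s, (⟨x, hxs⟩ : s) ∈ interior (Subtype.val ⁻¹' K : Set s) := by
  subst h; exact ⟨hx, hx'⟩

/-- The basic facial reduction step: if a closed convex cone `K` and an
affine subspace `A` intersect but `A` misses the relative interior of `K`,
then there is a reducing direction `s` vanishing on `A`, lying in the dual
cone `K*` but not in `K⊥`, and `F = K ∩ {s}⊥` is a face of `K` properly
contained in `K` containing `A ∩ K`. -/
theorem facial_reduction_step
    {E : Type*} [NormedAddCommGroup E] [InnerProductSpace ℝ E]
    [FiniteDimensional ℝ E]
    (K : Set E) (hKclosed : IsClosed K) (hKconv : Convex ℝ K)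
    (hKcone : ∀ c : ℝ, 0 ≤ c → ∀ x ∈ K, c • x ∈ K)
    (A : AffineSubspace ℝ E) (hAK : ((A : Set E) ∩ K).Nonempty)
    (hdisj : (A : Set E) ∩ intrinsicInterior ℝ K = ∅) :
    ∃ s : E,
      (∀ x ∈ (A : Set E), inner ℝ s x = (0 : ℝ)) ∧
      (∀ x ∈ K, (0 : ℝ) ≤ inner ℝ s x) ∧
      ¬ (∀ x ∈ K, inner ℝ s x = (0 : ℝ)) ∧
      ((A : Set E) ∩ K ⊆ K ∩ {x | inner ℝ s x = (0 : ℝ)}) ∧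
      (K ∩ {x | inner ℝ s x = (0 : ℝ)} ⊂ K) ∧
      (∀ x ∈ K, ∀ y ∈ K, x + y ∈ K ∩ {x | inner ℝ s x = (0 : ℝ)} →
        x ∈ K ∩ {x | inner ℝ s x = (0 : ℝ)} ∧
        y ∈ K ∩ {x | inner ℝ s x = (0 : ℝ)}) := by
  obtain ⟨a0, ha0A, ha0K⟩ := hAK
  have h0K : (0 : E) ∈ K := by simpa using hKcone 0 le_rfl a0 ha0K
  set S : Submodule ℝ E := Submodule.span ℝ K with hSdef
  have hKS : K ⊆ (S : Set E) := Submodule.subset_span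
  have hset : (affineSpan ℝ K : Set E) = (S : Set E) := by
    rw [← affineSpan_insert_zero, Set.insert_eq_of_mem h0K]
  set U : Set S := (Subtype.val ⁻¹' K : Set S) with hUdef
  have hUconv : Convex ℝ U := hKconv.linear_preimage S.subtype
  have h0U : (0 : S) ∈ U := by simpa [hUdef] using h0K
  have hUspan : affineSpan ℝ U = ⊤ := by
    have h1 : Submodule.span ℝ U = (⊤ : Submodule ℝ S) := by
      apply Submodule.map_injective_of_injective S.injective_subtype
      rw [Submodule.map_span, Submodule.map_top, Submodule.range_subtype]
      have h2 : (S.subtype '' U) = K := by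
        rw [show (S.subtype '' U) = (Subtype.val '' (Subtype.val ⁻¹' K : Set S)) from rfl,
          Set.image_preimage_eq_inter_range, Subtype.range_val]
        exact Set.inter_eq_self_of_subset_left hKS
      rw [h2]
    have h2 : (affineSpan ℝ U : Set S) = ((Submodule.span ℝ U : Submodule ℝ S) : Set S) := by
      rw [← affineSpan_insert_zero, Set.insert_eq_of_mem h0U]
    rw [← AffineSubspace.coe_eq_univ_iff, h2, h1]
    rfl
  obtain ⟨w, hw⟩ : (interior U).Nonempty :=
    hUconv.interior_nonempty_iff_affineSpan_eq_top.mpr hUspan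
  set A' : Set S := (Subtype.val ⁻¹' (A : Set E) : Set S) with hA'def
  have hA'conv : Convex ℝ A' := A.convex.linear_preimage S.subtype
  have hmemII : ∀ x : S, x ∈ interior U → (x : E) ∈ intrinsicInterior ℝ K := by
    intro x hx
    obtain ⟨hp, hp2⟩ := interior_subtype_congr hset K x.2 (by exact hx)
    exact mem_intrinsicInterior.mpr ⟨⟨x, hp⟩, hp2, rfl⟩
  have hdisjUA : Disjoint (interior U) A' := by
    rw [Set.disjoint_left]
    intro x hx hxA
    exact (Set.eq_empty_iff_forall_notMem.1 hdisj x) ⟨hxA, hmemII x hx⟩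
  obtain ⟨f, u, hfU, hfA⟩ :=
    geometric_hahn_banach_open hUconv.interior isOpen_interior hA'conv hdisjUA
  -- f ≤ u on all of U by convexity
  have hfU' : ∀ k ∈ U, f k ≤ u := by
    intro k hk
    by_contra hgt
    push_neg at hgt
    have hc : f w < u := hfU w hw
    have hdc : (0:ℝ) < f k - f w := by linarith
    set θ : ℝ := ((u - f w) / (f k - f w) + 1) / 2 with hθdef
    have h1 : (u - f w) / (f k - f w) < 1 := (div_lt_one hdc).mpr (by linarith)
    have h2 : 0 < (u - f w) / (f k - f w) := div_pos (by linarith) hdc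
    have hθ0 : 0 < θ := by positivity
    have hθ1 : θ < 1 := by simp only [hθdef]; linarith
    have hmem : (1 - θ) • w + θ • k ∈ interior U :=
      hUconv.combo_interior_self_mem_interior hw hk (by linarith) (le_of_lt hθ0) (by ring)
    have h3 := hfU _ hmem
    rw [map_add, map_smul, map_smul] at h3
    simp only [smul_eq_mul] at h3
    have hθgt : (u - f w) / (f k - f w) < θ := by simp only [hθdef]; linarith
    have h4 : u - f w < θ * (f k - f w) := (div_lt_iff₀ hdc).mp hθgt
    nlinarith
  -- a0 as element of S
  set a0' : S := ⟨a0, hKS ha0K⟩ with ha0'def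
  have ha0'U : a0' ∈ U := ha0K
  have ha0'A : a0' ∈ A' := ha0A
  have hfa0 : f a0' = u := le_antisymm (hfU' _ ha0'U) (hfA _ ha0'A)
  have hu0 : u = 0 := by
    have h2a0 : (2:ℝ) • a0' ∈ U := by
      show ((((2:ℝ) • a0' : S)) : E) ∈ K
      rw [Submodule.coe_smul]
      exact hKcone 2 (by norm_num) a0 ha0K
    have h2 := hfU' _ h2a0
    rw [map_smul, smul_eq_mul, hfa0] at h2
    have h3 := hfU' _ h0U
    rw [map_zero] at h3
    linarith
  have hAzero : ∀ b ∈ A', f b = 0 := by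
    intro b hb
    have hge : (0:ℝ) ≤ f b := hu0 ▸ hfA b hb
    have hrA : ((a0' + a0' - b : S) : E) ∈ (A : Set E) := by
      push_cast
      have hd : a0 -ᵥ (b : E) ∈ A.direction := AffineSubspace.vsub_mem_direction ha0A hb
      have h5 : (a0 -ᵥ (b:E)) +ᵥ a0 ∈ A := AffineSubspace.vadd_mem_of_mem_direction hd ha0A
      have heq : a0 + a0 - (b:E) = (a0 -ᵥ (b:E)) +ᵥ a0 := by
        simp only [vsub_eq_sub, vadd_eq_add]; abel
      rw [heq]; exact h5
    have hr := hfA _ hrA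
    rw [map_sub, map_add, hfa0, hu0] at hr
    have : f b ≤ 0 := by linarith
    linarith
  -- move to E : define s₀ representing -f ∘ P_S
  haveI : CompleteSpace S := FiniteDimensional.complete ℝ S
  set g : E →L[ℝ] ℝ := f.comp (S.orthogonalProjectionOnto) with hgdef
  set s₀ : E := (InnerProductSpace.toDual ℝ E).symm (-g) with hs₀def
  have hs₀ : ∀ x : E, inner ℝ s₀ x = -(g x) := by
    intro x
    rw [hs₀def, InnerProductSpace.toDual_symm_apply]
    rfl
  have hPmem : ∀ (x : E) (hx : x ∈ S), S.orthogonalProjectionOnto x = ⟨x, hx⟩ :=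
    fun x hx => Subtype.ext (Submodule.starProjection_eq_self_iff.mpr hx)
  have hs₀K : ∀ (x : E) (hx : x ∈ S), inner ℝ s₀ x = -(f ⟨x, hx⟩) := by
    intro x hx
    rw [hs₀ x, hgdef, ContinuousLinearMap.comp_apply, hPmem x hx]
  -- the correction term q
  set V : Submodule ℝ E := A.direction with hVdef
  set πE : E →ₗ[ℝ] E :=
    LinearMap.id - (S.subtype ∘ₗ (S.orthogonalProjectionOnto : E →L[ℝ] S).toLinearMap) with hπEdef
  have hπEapply : ∀ x : E, πE x = x - (S.orthogonalProjectionOnto x : E) := fun x => rfl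
  have hπEorth : ∀ x : E, πE x ∈ Sᗮ := fun x => by
    rw [hπEapply]; exact Submodule.sub_starProjection_mem_orthogonal (K := S) x
  set πV : V →ₗ[ℝ] E := πE ∘ₗ V.subtype with hπVdef
  set ψ : V →ₗ[ℝ] ℝ := (g : E →ₗ[ℝ] ℝ) ∘ₗ V.subtype with hψdef
  have hψapply : ∀ v : V, ψ v = g (v : E) := fun v => rfl
  have hker : LinearMap.ker πV ≤ LinearMap.ker ψ := by
    intro v hv
    rw [LinearMap.mem_ker] at hv ⊢
    have hv' : (v : E) - (S.orthogonalProjectionOnto (v : E) : E) = 0 := hv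
    have hvS : (v : E) ∈ S := by
      have h6 : (v : E) = (S.orthogonalProjectionOnto (v : E) : E) := by
        rw [← sub_eq_zero]; exact hv'
      rw [h6]; exact (S.orthogonalProjectionOnto (v : E)).2
    have hbA : ((v : E) + a0) ∈ (A : Set E) := by
      have h7 := AffineSubspace.vadd_mem_of_mem_direction v.2 ha0A
      simpa [vadd_eq_add] using h7
    have hbA' : (⟨(v : E), hvS⟩ + a0' : S) ∈ A' := by
      show (((⟨(v : E), hvS⟩ + a0' : S)) : E) ∈ (A : Set E)
      exact hbA
    have h7 : f (⟨(v : E), hvS⟩ + a0') = 0 := hAzero _ hbA'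
    rw [map_add, hfa0, hu0, add_zero] at h7
    rw [hψapply, hgdef, ContinuousLinearMap.comp_apply, hPmem _ hvS, h7]
  set Z : Submodule ℝ E := LinearMap.range πV with hZdef
  have hZS : Z ≤ Sᗮ := by
    rintro z ⟨v, rfl⟩
    exact hπEorth (v : E)
  have hSZ : (S : Set E) ⊆ (Zᗮ : Set E) := fun x hx =>
    (Submodule.orthogonal_le hZS) (S.le_orthogonal_orthogonal hx)
  set χ₀ : Z →ₗ[ℝ] ℝ :=
    (Submodule.liftQ (LinearMap.ker πV) ψ hker) ∘ₗ
      (πV.quotKerEquivRange.symm : Z →ₗ[ℝ] V ⧸ LinearMap.ker πV) with hχ₀def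
  have hχ₀ : ∀ v : V, χ₀ ⟨πV v, LinearMap.mem_range_self πV v⟩ = ψ v := by
    intro v
    rw [hχ₀def]
    simp only [LinearMap.coe_comp, Function.comp_apply, LinearEquiv.coe_coe]
    rw [LinearMap.quotKerEquivRange_symm_apply_image, Submodule.mkQ_apply,
      Submodule.liftQ_apply]
  haveI : CompleteSpace Z := FiniteDimensional.complete ℝ Z
  set χ : Z →L[ℝ] ℝ := LinearMap.toContinuousLinearMap χ₀ with hχdef
  set q : E := (InnerProductSpace.toDual ℝ E).symm (χ.comp (Z.orthogonalProjectionOnto)) with hqdef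
  have hq : ∀ x : E, inner ℝ q x = χ₀ (Z.orthogonalProjectionOnto x) := by
    intro x
    rw [hqdef, InnerProductSpace.toDual_symm_apply]
    rfl
  have hqS : ∀ x ∈ S, inner ℝ q x = (0 : ℝ) := by
    intro x hx
    rw [hq x, Submodule.orthogonalProjectionOnto_apply_of_mem_orthogonal (hSZ hx), map_zero]
  have hqV : ∀ v : V, inner ℝ q (v : E) = ψ v := by
    intro v
    have hPZ : Z.orthogonalProjectionOnto (v : E) = ⟨πV v, LinearMap.mem_range_self πV v⟩ := by
      apply Subtype.ext
      apply Submodule.eq_starProjection_of_mem_orthogonal (K := Z) (LinearMap.mem_range_self πV v)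
      have h8 : (v : E) - πV v = (S.orthogonalProjectionOnto (v : E) : E) := by
        rw [hπVdef]
        simp only [LinearMap.coe_comp, Function.comp_apply, Submodule.coe_subtype]
        rw [hπEapply]
        abel
      rw [h8]
      exact hSZ (S.orthogonalProjectionOnto (v : E)).2
    rw [hq (v : E), hPZ, hχ₀ v]
  -- assemble the final answer
  set s : E := s₀ + q with hsdef
  have hsS : ∀ (x : E) (hx : x ∈ S), inner ℝ s x = -(f ⟨x, hx⟩) := by
    intro x hx
    rw [hsdef, inner_add_left, hqS x hx, add_zero, hs₀K x hx]
  -- s vanishes on A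
  have hvanish : ∀ x ∈ (A : Set E), inner ℝ s x = (0 : ℝ) := by
    intro x hxA
    have hd : x - a0 ∈ V := by
      have := AffineSubspace.vsub_mem_direction hxA ha0A
      simpa [vsub_eq_sub] using this
    have hsplit : x = a0 + (x - a0) := by abel
    rw [hsplit, inner_add_right]
    have h10 : inner ℝ s a0 = (0 : ℝ) := by
      rw [hsS a0 (hKS ha0K)]
      have : f ⟨a0, hKS ha0K⟩ = u := hfa0
      rw [this, hu0, neg_zero]
    have h11 : inner ℝ s (x - a0) = (0 : ℝ) := by
      rw [hsdef, inner_add_left]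
      have h12 : inner ℝ q (x - a0) = ψ ⟨x - a0, hd⟩ := hqV ⟨x - a0, hd⟩
      rw [h12, hψapply, hs₀ (x - a0)]
      ring
    rw [h10, h11, add_zero]
  -- s is nonnegative on K
  have hnonneg : ∀ x ∈ K, (0 : ℝ) ≤ inner ℝ s x := by
    intro x hx
    rw [hsS x (hKS hx)]
    have h13 : f ⟨x, hKS hx⟩ ≤ u := hfU' _ hx
    rw [hu0] at h13
    linarith
  -- the witness with strictly positive inner product
  have hwU : w ∈ U := interior_subset hw
  have hwK : (w : E) ∈ K := hwU
  have hwpos : (0 : ℝ) < inner ℝ s (w : E) := by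
    rw [hsS (w : E) (hKS hwK)]
    have h14 : f ⟨(w : E), hKS hwK⟩ < u := by
      have : (⟨(w : E), hKS hwK⟩ : S) = w := Subtype.ext rfl
      rw [this]
      exact hfU w hw
    rw [hu0] at h14
    linarith
  refine ⟨s, hvanish, hnonneg, ?_, ?_, ?_, ?_⟩
  · intro hall
    have := hall (w : E) hwK
    linarith
  · rintro x ⟨hxA, hxK⟩
    exact ⟨hxK, hvanish x hxA⟩
  · constructor
    · exact Set.inter_subset_left
    · intro hKsub
      have h15 := (hKsub hwK).2
      simp only [Set.mem_setOf_eq] at h15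
      linarith
  · rintro x hx y hy ⟨hxyK, hxy0⟩
    simp only [Set.mem_setOf_eq] at hxy0
    rw [inner_add_right] at hxy0
    have hx0 := hnonneg x hx
    have hy0 := hnonneg y hy
    exact ⟨⟨hx, by simp only [Set.mem_setOf_eq]; linarith⟩,
      ⟨hy, by simp only [Set.mem_setOf_eq]; linarith⟩⟩
end
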